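/- Let G' be the odd-degree transformation of a finite simple graph G. A binary opinion profile μ on G is a valid opinion profile on G if and only if its odd-degree transformation μ' is a valid opinion profile on G'. -/

import Mathlib

open Classical

/-- A binary opinion profile `μ` on a finite simple graph `G` is valid under the
local majority rule. -/
def IsValidProfile {V : Type*} [Fintype V] (G : SimpleGraph V) (μ : V → Bool) : Prop :=
  ∀ v : V,
    ((G.neighborFinset v).filter fun u => μ u = μ v).card ≥
    ((G.neighborFinset v).filter fun u => μ u ≠ μ v).card

/-- The odd-degree transformation of `G`: keep all vertices and edges of `G`
(the left summands), and attach to each even-degree vertex `v` a new auxiliary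
pendant vertex `Sum.inr ⟨v, _⟩` adjacent only to `v`. -/
def oddTransform {V : Type*} [Fintype V] (G : SimpleGraph V) :
    SimpleGraph (V ⊕ {v : V // Even (G.degree v)}) where
  Adj x y :=
    match x, y with
    | Sum.inl a, Sum.inl b => G.Adj a b
    | Sum.inl a, Sum.inr u => u.val = a
    | Sum.inr u, Sum.inl a => u.val = a
    | Sum.inr _, Sum.inr _ => False
  symm := by
    constructor
    intro x y h
    cases x <;> cases y <;> simp_all [SimpleGraph.adj_comm]
  loopless := by
    constructor
    intro x h
    cases x <;> simp_all

/-- The odd-degree transformation of a profile `μ` on `G`: original vertices keep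
their opinion, each auxiliary vertex copies the opinion of the vertex it is
attached to. -/
def oddTransformProfile {V : Type*} [Fintype V] (G : SimpleGraph V) (μ : V → Bool) :
    V ⊕ {v : V // Even (G.degree v)} → Bool :=
  Sum.elim μ (fun u => μ u.val)

/-!
At an auxiliary vertex the only neighbour shares its opinion, so the majority condition holds
there for free. At an original vertex `v` the disagreeing neighbours are the same in `G` and
`G'`, while the agreeing ones gain the pendant vertex exactly when `deg v` is even. In that case
the agreeing and disagreeing counts `a`, `d` satisfy `a + d = deg v`, so they have the same
parity and `d ≤ a + 1` already forces `d ≤ a`.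
-/

theorem Nat.le_add_one_iff_le_of_even_add {a d : ℕ} (h : Even (a + d)) : d ≤ a + 1 ↔ d ≤ a := by
  obtain ⟨k, hk⟩ := h
  omega

def IsValidAt {V : Type*} [Fintype V] (G : SimpleGraph V) (μ : V → Bool) (v : V) : Prop :=
  ((G.neighborFinset v).filter fun u => μ u ≠ μ v).card ≤
    ((G.neighborFinset v).filter fun u => μ u = μ v).card

section OddTransform

variable {V : Type*} [Fintype V] (G : SimpleGraph V) (μ : V → Bool)

theorem isValidProfile_iff_forall_isValidAt : IsValidProfile G μ ↔ ∀ v, IsValidAt G μ v :=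
  Iff.rfl

theorem oddTransform_neighborFinset_inl (v : V) :
    (oddTransform G).neighborFinset (Sum.inl v) =
      (G.neighborFinset v).disjSum (({v} : Finset V).subtype fun w => Even (G.degree w)) := by
  ext (a | u)
  · simp only [SimpleGraph.mem_neighborFinset, Finset.inl_mem_disjSum]
    rfl
  · simp only [SimpleGraph.mem_neighborFinset, Finset.inr_mem_disjSum, Finset.mem_subtype,
      Finset.mem_singleton]
    rfl

theorem oddTransform_neighborFinset_inr (u : {v : V // Even (G.degree v)}) :
    (oddTransform G).neighborFinset (Sum.inr u) = {Sum.inl u.val} := by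
  ext (a | w)
  · simp only [SimpleGraph.mem_neighborFinset, Finset.mem_singleton, Sum.inl.injEq]
    exact eq_comm
  · simp only [SimpleGraph.mem_neighborFinset, Finset.mem_singleton, reduceCtorEq, iff_false]
    exact id

theorem isValidAt_oddTransform_inr (u : {v : V // Even (G.degree v)}) :
    IsValidAt (oddTransform G) (oddTransformProfile G μ) (Sum.inr u) := by
  rw [IsValidAt, oddTransform_neighborFinset_inr, Finset.filter_singleton, Finset.filter_singleton]
  simp [oddTransformProfile]

theorem oddTransform_filter_eq_inl (v : V) :
    ((oddTransform G).neighborFinset (Sum.inl v)).filter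
        (fun x => oddTransformProfile G μ x = oddTransformProfile G μ (Sum.inl v)) =
      ((G.neighborFinset v).filter fun u => μ u = μ v).disjSum
        (({v} : Finset V).subtype fun w => Even (G.degree w)) := by
  ext (a | u) <;> simp +contextual [oddTransform_neighborFinset_inl, oddTransformProfile]

theorem oddTransform_filter_ne_inl (v : V) :
    ((oddTransform G).neighborFinset (Sum.inl v)).filter
        (fun x => oddTransformProfile G μ x ≠ oddTransformProfile G μ (Sum.inl v)) =
      ((G.neighborFinset v).filter fun u => μ u ≠ μ v).map Function.Embedding.inl := by
  ext (a | u) <;> simp +contextual [oddTransform_neighborFinset_inl, oddTransformProfile]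

theorem card_filter_eq_add_card_filter_ne (v : V) :
    ((G.neighborFinset v).filter fun u => μ u = μ v).card +
      ((G.neighborFinset v).filter fun u => μ u ≠ μ v).card = G.degree v := by
  rw [Finset.card_filter_add_card_filter_not, SimpleGraph.card_neighborFinset_eq_degree]

theorem isValidAt_oddTransform_inl_iff (v : V) :
    IsValidAt (oddTransform G) (oddTransformProfile G μ) (Sum.inl v) ↔ IsValidAt G μ v := by
  have hpendant : (({v} : Finset V).subtype fun w => Even (G.degree w)).card =
      if Even (G.degree v) then 1 else 0 := by
    rw [Finset.card_subtype, Finset.filter_singleton]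
    split_ifs <;> rfl
  rw [IsValidAt, oddTransform_filter_eq_inl, oddTransform_filter_ne_inl, Finset.card_disjSum,
    Finset.card_map, hpendant]
  split_ifs with heven
  · rw [← card_filter_eq_add_card_filter_ne G μ v] at heven
    exact Nat.le_add_one_iff_le_of_even_add heven
  · rfl

end OddTransform

/-- A profile `μ` is valid on `G` iff its odd-degree transformation
is valid on the odd-degree transformation of `G`. -/
theorem valid_iff_oddTransform_valid {V : Type*} [Fintype V]
    (G : SimpleGraph V) (μ : V → Bool) :
    IsValidProfile G μ ↔ IsValidProfile (oddTransform G) (oddTransformProfile G μ) := by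
  simp only [isValidProfile_iff_forall_isValidAt, Sum.forall, isValidAt_oddTransform_inl_iff,
    isValidAt_oddTransform_inr, implies_true, and_true]
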